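/- There exists an optimal prefix decompressor: a partial computable prefix function U from binary strings to binary strings such that for every partial computable prefix function D there is a constant c with KP_U(x) ≤ KP_D(x) + c for all binary strings x. -/

import Mathlib

/-- Plain Kolmogorov complexity of `x` with respect to decompressor `D`
(also used for prefix decompressors, giving prefix complexity `KP_D`). -/
noncomputable def Kc (D : List Bool →. List Bool) (x : List Bool) : ℕ∞ :=
  sInf {n : ℕ∞ | ∃ p : List Bool, x ∈ D p ∧ (p.length : ℕ∞) = n}

/-- `D` is a prefix function: it is not defined simultaneously on a string and
a proper extension of it. -/
def PrefixFn (D : List Bool →. List Bool) : Prop :=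
  ∀ p q : List Bool, p <+: q → p ≠ q → (D p).Dom → ¬(D q).Dom

/-!
The optimal decompressor reads a program `1^e 0 q` as "run the `e`-th partial recursive function on
`q`". To make it prefix-free uniformly in `e`, every halting run on an input `p` gets the key
`⟪s, encode p⟫`, where `s` is a number of steps by which the run has halted; distinct inputs have
distinct keys. The output on `q` is released at the least key of `q`, unless an input comparable
with `q` (a proper prefix or extension) already has a smaller key. Of two comparable inputs in the
domain, the one with the larger key is therefore blocked; and if the `e`-th function is itself a
prefix function, nothing is ever blocked, so it is simulated with an overhead of `e + 1` bits.
-/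

open Nat.Partrec (Code)
open Nat.Partrec.Code Encodable Denumerable Primrec

theorem Kc_le_length {D : List Bool →. List Bool} {p x : List Bool} (h : x ∈ D p) :
    Kc D x ≤ p.length :=
  sInf_le ⟨p, h, rfl⟩

theorem Kc_eq_top_or_exists (D : List Bool →. List Bool) (x : List Bool) :
    Kc D x = ⊤ ∨ ∃ p, x ∈ D p ∧ Kc D x = p.length := by
  rcases Set.eq_empty_or_nonempty {n : ℕ∞ | ∃ p : List Bool, x ∈ D p ∧ (p.length : ℕ∞) = n}
    with hS | hS
  · exact .inl (by rw [Kc, hS, sInf_empty])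
  · obtain ⟨p, hp, hlen⟩ := csInf_mem hS
    exact .inr ⟨p, hp, hlen.symm⟩

theorem Kc_le_Kc_add {D D' : List Bool →. List Bool} {f : List Bool → List Bool} {c : ℕ}
    (hf : ∀ {p x}, x ∈ D p → x ∈ D' (f p)) (hlen : ∀ p, (f p).length ≤ p.length + c)
    (x : List Bool) : Kc D' x ≤ Kc D x + c := by
  rcases Kc_eq_top_or_exists D x with htop | ⟨p, hp, hKc⟩
  · simp [htop]
  · calc Kc D' x ≤ (f p).length := Kc_le_length (hf hp)
      _ ≤ Kc D x + c := by rw [hKc]; exact_mod_cast hlen p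

theorem Partrec.exists_code {α σ : Type*} [Primcodable α] [Primcodable σ] {f : α →. σ}
    (hf : Partrec f) : ∃ c : Code, ∀ a, eval c (encode a) = (f a).map encode := by
  obtain ⟨c, hc⟩ := Code.exists_code.1 hf
  exact ⟨c, fun a => by simp [hc, encodek]⟩

namespace PrefixComplexity

def IsHaltingKey (c : Code) (p : List Bool) (m : ℕ) : Prop :=
  m.unpair.2 = encode p ∧ (evaln m.unpair.1 c (encode p)).isSome

instance (c : Code) (p : List Bool) (m : ℕ) : Decidable (IsHaltingKey c p m) :=
  inferInstanceAs (Decidable (_ ∧ _))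

def Preempted (c : Code) (q : List Bool) (m : ℕ) : Prop :=
  ∃ k < m, ∃ p, p ≠ q ∧ (p <+: q ∨ q <+: p) ∧ IsHaltingKey c p k

open Classical in
noncomputable def prefixRestrict (c : Code) (q : List Bool) : Part (List Bool) :=
  (Nat.rfind (fun m => decide (IsHaltingKey c q m) : ℕ → Bool)).bind fun m =>
    ((if Preempted c q m then none else (evaln m.unpair.1 c (encode q)).bind decode :
      Option (List Bool)) : Part (List Bool))

variable {c : Code}

theorem IsHaltingKey.inj {p q : List Bool} {m : ℕ} (hp : IsHaltingKey c p m)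
    (hq : IsHaltingKey c q m) : p = q :=
  encode_injective (hp.1.symm.trans hq.1)

theorem exists_isHaltingKey_iff {p : List Bool} :
    (∃ m, IsHaltingKey c p m) ↔ (eval c (encode p)).Dom := by
  constructor
  · rintro ⟨m, -, hm⟩
    obtain ⟨v, hv⟩ := Option.isSome_iff_exists.1 hm
    exact Part.dom_iff_mem.2 ⟨v, evaln_sound hv⟩
  · intro h
    obtain ⟨s, hs⟩ := evaln_complete.1 (Part.get_mem h)
    exact ⟨Nat.pair s (encode p), by simp [IsHaltingKey, Option.mem_def.1 hs]⟩

theorem exists_isHaltingKey_of_dom {q : List Bool} (h : (prefixRestrict c q).Dom) :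
    ∃ m, IsHaltingKey c q m ∧ ¬Preempted c q m := by
  obtain ⟨m, hm, hx⟩ := Part.mem_bind_iff.1 (Part.get_mem h)
  refine ⟨m, by simpa using Nat.rfind_spec hm, fun hpre => ?_⟩
  simp [hpre] at hx

theorem prefixFn_prefixRestrict (c : Code) : PrefixFn (prefixRestrict c) := by
  intro q₁ q₂ hpre hne h₁ h₂
  obtain ⟨m₁, hm₁, hfree₁⟩ := exists_isHaltingKey_of_dom h₁
  obtain ⟨m₂, hm₂, hfree₂⟩ := exists_isHaltingKey_of_dom h₂
  rcases lt_trichotomy m₁ m₂ with hlt | rfl | hlt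
  · exact hfree₂ ⟨m₁, hlt, q₁, hne, .inl hpre, hm₁⟩
  · exact hne (hm₁.inj hm₂)
  · exact hfree₁ ⟨m₂, hlt, q₂, Ne.symm hne, .inr hpre, hm₂⟩

theorem mem_prefixRestrict {q x : List Bool} (hx : encode x ∈ eval c (encode q))
    (hiso : ∀ p ≠ q, (p <+: q ∨ q <+: p) → ¬(eval c (encode p)).Dom) :
    x ∈ prefixRestrict c q := by
  obtain ⟨s, hs⟩ := evaln_complete.1 hx
  have hkey : IsHaltingKey c q (Nat.pair s (encode q)) := by
    simp [IsHaltingKey, Option.mem_def.1 hs]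
  obtain ⟨m, hm, -⟩ := Nat.rfind_min' (p := fun m => decide (IsHaltingKey c q m))
    (decide_eq_true hkey)
  have hmkey : IsHaltingKey c q m := by simpa using Nat.rfind_spec hm
  have hfree : ¬Preempted c q m := fun ⟨_, _, p, hpq, hcomp, hp⟩ =>
    hiso p hpq hcomp (exists_isHaltingKey_iff.1 ⟨_, hp⟩)
  obtain ⟨v, hv⟩ := Option.isSome_iff_exists.1 hmkey.2
  have hvx : v = encode x := Part.mem_unique (evaln_sound hv) hx
  refine Part.mem_bind_iff.2 ⟨m, hm, ?_⟩
  simp [hfree, hv, hvx]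

theorem primrecPred_isHaltingKey :
    PrimrecPred fun a : (Code × List Bool) × ℕ => IsHaltingKey a.1.1 a.1.2 a.2 :=
  .and (Primrec.eq.comp (snd.comp (unpair.comp snd)) (Primrec.encode.comp (snd.comp fst)))
    (Primrec.eq.comp (option_isSome.comp (primrec_evaln.comp (pair
      (pair (fst.comp (unpair.comp snd)) (fst.comp fst)) (Primrec.encode.comp (snd.comp fst)))))
      (const true))

theorem primrecRel_isPrefix : PrimrecRel fun p q : List Bool => p <+: q :=
  (Primrec.eq.comp fst (list_take.comp (list_length.comp fst) snd)).of_eq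
    fun _ => List.prefix_iff_eq_take.symm

theorem primrecPred_preempted :
    PrimrecPred fun a : (Code × List Bool) × ℕ => Preempted a.1.1 a.1.2 a.2 := by
  have hcand : PrimrecRel fun (p : List Bool) (b : ℕ × (Code × List Bool) × ℕ) =>
      p ≠ b.2.1.2 ∧ (p <+: b.2.1.2 ∨ b.2.1.2 <+: p) ∧ IsHaltingKey b.2.1.1 p b.1 :=
    .and (Primrec.eq.comp fst (snd.comp (fst.comp (snd.comp snd)))).not <|
      .and (.or (primrecRel_isPrefix.comp fst (snd.comp (fst.comp (snd.comp snd))))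
        (primrecRel_isPrefix.comp (snd.comp (fst.comp (snd.comp snd))) fst)) <|
      primrecPred_isHaltingKey.comp (pair (pair (fst.comp (fst.comp (snd.comp snd))) fst)
        (fst.comp snd))
  have hk : PrimrecRel fun (k : ℕ) (a : (Code × List Bool) × ℕ) =>
      ∃ p ∈ (decode₂ (List Bool) k.unpair.2).toList,
        p ≠ a.1.2 ∧ (p <+: a.1.2 ∨ a.1.2 <+: p) ∧ IsHaltingKey a.1.1 p k :=
    hcand.exists_mem_list.comp
      (optionToList.comp (Primrec.decode₂.comp (snd.comp (unpair.comp fst)))) Primrec.id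
  refine (hk.exists_mem_list.comp (list_range.comp snd) Primrec.id).of_eq fun a => ?_
  simp only [Preempted, List.mem_range, Option.mem_toList, decode₂_eq_some]
  grind [IsHaltingKey]

open Classical in
theorem partrec_prefixRestrict : Partrec₂ prefixRestrict := by
  refine Partrec.bind (Partrec.rfind (Primrec.to_comp primrecPred_isHaltingKey.decide).partrec)
    (Computable.ofOption (Primrec.ite primrecPred_preempted (const none) ?_).to_comp)
  exact option_bind (primrec_evaln.comp (pair (pair (fst.comp (unpair.comp snd))
    (fst.comp fst)) (Primrec.encode.comp (snd.comp fst))))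
    (Primrec.decode.comp snd).to₂

def parse : List Bool → Option (ℕ × List Bool)
  | [] => none
  | true :: l => (parse l).map fun x => (x.1 + 1, x.2)
  | false :: l => some (0, l)

theorem parse_replicate_append (e : ℕ) (q : List Bool) :
    parse (List.replicate e true ++ false :: q) = some (e, q) := by
  induction e with
  | zero => rfl
  | succ e ih => simp [List.replicate_succ, parse, ih]

theorem eq_of_parse_eq_some {l q : List Bool} {e : ℕ} (h : parse l = some (e, q)) :
    l = List.replicate e true ++ false :: q := by
  induction l generalizing e with
  | nil => simp [parse] at h
  | cons b l ih =>
    cases b with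
    | false => simp only [parse, Option.some.injEq, Prod.mk.injEq] at h; simp [← h.1, h.2]
    | true =>
      simp only [parse, Option.map_eq_some_iff, Prod.mk.injEq, Prod.exists] at h
      obtain ⟨e', q', hl, rfl, rfl⟩ := h
      simp [ih hl, List.replicate_succ]

theorem replicate_append_prefix {e₁ e₂ : ℕ} {q₁ q₂ : List Bool}
    (h : List.replicate e₁ true ++ false :: q₁ <+: List.replicate e₂ true ++ false :: q₂) :
    e₁ = e₂ ∧ q₁ <+: q₂ := by
  induction e₁ generalizing e₂ with
  | zero => cases e₂ <;> simp_all [List.replicate_succ, List.cons_prefix_cons]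
  | succ e₁ ih =>
    cases e₂ with
    | zero => simp [List.replicate_succ, List.cons_prefix_cons] at h
    | succ e₂ =>
      simp only [List.replicate_succ, List.cons_append, List.cons_prefix_cons, true_and] at h
      exact (ih h).imp_left (congrArg _)

theorem primrec_parse : Primrec parse := by
  have h : Primrec₂ fun (_ : List Bool) (x : Bool × List Bool × Option (ℕ × List Bool)) =>
      bif x.1 then x.2.2.map (fun y => (y.1 + 1, y.2)) else some (0, x.2.1) :=
    cond (fst.comp snd)
      (option_map (snd.comp (snd.comp snd)) (pair (succ.comp (fst.comp snd)) (snd.comp snd)).to₂)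
      (option_some.comp (pair (const 0) (fst.comp (snd.comp snd))))
  refine (list_rec Primrec.id (const none) h).of_eq fun l => ?_
  induction l with
  | nil => rfl
  | cons b t ih => cases b <;> simp [parse, ← ih]

noncomputable def optimalDecompressor : List Bool →. List Bool := fun l =>
  (parse l : Part (ℕ × List Bool)).bind fun x => prefixRestrict (ofNat Code x.1) x.2

theorem partrec_optimalDecompressor : Partrec optimalDecompressor :=
  (Computable.ofOption primrec_parse.to_comp).bind <|
    partrec_prefixRestrict.comp ((Computable.ofNat Code).comp (Computable.fst.comp Computable.snd))
      (Computable.snd.comp Computable.snd)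

theorem exists_of_dom_optimalDecompressor {l : List Bool} (h : (optimalDecompressor l).Dom) :
    ∃ e q, l = List.replicate e true ++ false :: q ∧ (prefixRestrict (ofNat Code e) q).Dom := by
  obtain ⟨⟨e, q⟩, hparse, hx⟩ := Part.mem_bind_iff.1 (Part.get_mem h)
  exact ⟨e, q, eq_of_parse_eq_some (Part.mem_coe.1 hparse), Part.dom_iff_mem.2 ⟨_, hx⟩⟩

theorem prefixFn_optimalDecompressor : PrefixFn optimalDecompressor := by
  intro l₁ l₂ hpre hne h₁ h₂
  obtain ⟨e₁, q₁, rfl, hq₁⟩ := exists_of_dom_optimalDecompressor h₁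
  obtain ⟨e₂, q₂, rfl, hq₂⟩ := exists_of_dom_optimalDecompressor h₂
  obtain ⟨rfl, hq⟩ := replicate_append_prefix hpre
  exact prefixFn_prefixRestrict _ q₁ q₂ hq (fun h => hne (h ▸ rfl)) hq₁ hq₂

theorem mem_optimalDecompressor_of_mem {D : List Bool →. List Bool} {c : Code}
    (hc : ∀ q, eval c (encode q) = (D q).map encode) (hD : PrefixFn D) {q x : List Bool}
    (hx : x ∈ D q) : x ∈ optimalDecompressor (List.replicate (encode c) true ++ false :: q) := by
  have hq : (D q).Dom := Part.dom_iff_mem.2 ⟨x, hx⟩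
  have hcx : x ∈ prefixRestrict c q := by
    refine mem_prefixRestrict (hc q ▸ Part.mem_map encode hx) fun p hpq hcomp hp => ?_
    rw [hc p] at hp
    rcases hcomp with h | h
    · exact hD p q h hpq hp hq
    · exact hD q p h hpq.symm hq hp
  refine Part.mem_bind_iff.2 ⟨(encode c, q), ?_, ?_⟩
  · simp [parse_replicate_append]
  · simpa using hcx

end PrefixComplexity

open PrefixComplexity

/-- There exists an optimal prefix decompressor. -/
theorem exists_optimal_prefix_decompressor :
    ∃ U : List Bool →. List Bool, Partrec U ∧ PrefixFn U ∧
      ∀ D : List Bool →. List Bool, Partrec D → PrefixFn D →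
        ∃ c : ℕ, ∀ x : List Bool, Kc U x ≤ Kc D x + (c : ℕ∞) := by
  refine ⟨optimalDecompressor, partrec_optimalDecompressor, prefixFn_optimalDecompressor,
    fun D hD hpre => ?_⟩
  obtain ⟨c, hc⟩ := hD.exists_code
  exact ⟨encode c + 1, Kc_le_Kc_add (mem_optimalDecompressor_of_mem hc hpre)
    fun p => by simp; omega⟩
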